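/- arXiv:math/0609236 — 6 statements merged into one kernel-verified Lean document; each statement's English description precedes it below -/
import Mathlib

section
/- Let A be a nonempty open subset of Euclidean space ℝⁿ with A ≠ ℝⁿ. Define i_A(x,y) = log(1 + |x−y| / d(x, ∂A)) for x, y in A, where d(x, ∂A) = inf_{a ∈ ∂A} |x−a|. Then i_A satisfies the triangle inequality: i_A(x,y) + i_A(y,z) ≥ i_A(x,z) for all x, y, z ∈ A. -/
/-- The function i_A(x,y) = log(1 + |x-y|/d(x,∂A)) satisfies the triangle inequality. -/
theorem iA_triangle {n : ℕ} (A : Set (EuclideanSpace ℝ (Fin n)))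
    (hA : IsOpen A) (hne : A.Nonempty) (hproper : A ≠ Set.univ)
    (x y z : EuclideanSpace ℝ (Fin n)) (hx : x ∈ A) (hy : y ∈ A) (hz : z ∈ A) :
    Real.log (1 + dist x z / Metric.infDist x (frontier A)) ≤
      Real.log (1 + dist x y / Metric.infDist x (frontier A)) +
      Real.log (1 + dist y z / Metric.infDist y (frontier A)) := by
  have hfr : (frontier A).Nonempty := by
    rw [Set.nonempty_iff_ne_empty]
    intro h
    rcases isClopen_iff.mp (isClopen_iff_frontier_eq_empty.mpr h) with h' | h'
    · exact hne.ne_empty h'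
    · exact hproper h'
  set dx := Metric.infDist x (frontier A) with hdx
  set dy := Metric.infDist y (frontier A) with hdy
  have hxf : x ∉ frontier A := fun h => h.2 (hA.interior_eq.symm ▸ hx)
  have hyf : y ∉ frontier A := fun h => h.2 (hA.interior_eq.symm ▸ hy)
  have hdxpos : 0 < dx :=
    (IsClosed.notMem_iff_infDist_pos isClosed_frontier hfr).mp hxf
  have hdypos : 0 < dy :=
    (IsClosed.notMem_iff_infDist_pos isClosed_frontier hfr).mp hyf
  have hlip : dy ≤ dx + dist x y := by
    calc dy ≤ dx + dist y x := Metric.infDist_le_infDist_add_dist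
    _ = dx + dist x y := by rw [dist_comm]
  have htri : dist x z ≤ dist x y + dist y z := dist_triangle x y z
  have h1 : (0:ℝ) < 1 + dist x y / dx := by positivity
  have h2 : (0:ℝ) < 1 + dist y z / dy := by positivity
  have key : 1 + dist x z / dx ≤ (1 + dist x y / dx) * (1 + dist y z / dy) := by
    have e1 : dist x y / dx * dx = dist x y := div_mul_cancel₀ _ hdxpos.ne'
    have e2 : dist y z / dy * dy = dist y z := div_mul_cancel₀ _ hdypos.ne'
    have e3 : dist x z / dx * dx = dist x z := div_mul_cancel₀ _ hdxpos.ne'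
    have hb : 0 ≤ dist y z / dy := div_nonneg dist_nonneg hdypos.le
    nlinarith [mul_le_mul_of_nonneg_left hlip hb, hdxpos, hdypos,
      mul_nonneg (div_nonneg (dist_nonneg (x := x) (y := y)) hdxpos.le) hb]
  calc Real.log (1 + dist x z / dx)
      ≤ Real.log ((1 + dist x y / dx) * (1 + dist y z / dy)) :=
        Real.log_le_log (by positivity) key
    _ = _ := Real.log_mul h1.ne' h2.ne'
end

section
/- Let A be a nonempty proper open subset of ℝⁿ and x, y ∈ A. Then sup over a ∈ ∂A of log(|x−a|/|y−a|) equals log(1 + |x−y|/d(x,∂A)) is false in general, but the inequality δ_A(x,y) ≤ i_A(y,x) always holds, i.e., sup_{a ∈ ∂A} log(|x−a|/|y−a|) ≤ log(1 + |x−y|/d(y,∂A)). -/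
/-- The Apollonian weak metric is bounded above by the dual of the weak metric i_A:
δ_A(x,y) ≤ i_A(y,x). -/
theorem apollonian_le_iA_dual {n : ℕ} (A : Set (EuclideanSpace ℝ (Fin n)))
    (hA : IsOpen A) (hne : A.Nonempty) (hproper : A ≠ Set.univ)
    (x y : EuclideanSpace ℝ (Fin n)) (hx : x ∈ A) (hy : y ∈ A) :
    (⨆ a : frontier A, Real.log (dist x (a : EuclideanSpace ℝ (Fin n)) / dist y a)) ≤
      Real.log (1 + dist x y / Metric.infDist y (frontier A)) := by
  have hfr : (frontier A).Nonempty := nonempty_frontier_iff.2 ⟨hne, hproper⟩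
  have hdisj : ∀ a ∈ frontier A, a ∉ A := fun a ha haA =>
    (disjoint_frontier_iff_isOpen.2 hA).le_bot ⟨ha, haA⟩
  have hd : 0 < Metric.infDist y (frontier A) :=
    (isClosed_frontier.notMem_iff_infDist_pos hfr).1 (fun h => hdisj y h hy)
  haveI : Nonempty (frontier A) := hfr.to_subtype
  apply ciSup_le
  intro a
  have hya : 0 < dist y a := dist_pos.2 (fun h => hdisj a a.2 (h ▸ hy))
  have hxa : 0 < dist x (a : EuclideanSpace ℝ (Fin n)) :=
    dist_pos.2 (fun h => hdisj a a.2 (h ▸ hx))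
  have hda : Metric.infDist y (frontier A) ≤ dist y a := Metric.infDist_le_dist_of_mem a.2
  apply Real.log_le_log (by positivity)
  have h1 : dist x (a : EuclideanSpace ℝ (Fin n)) / dist y a ≤ 1 + dist x y / dist y a := by
    rw [div_le_iff₀ hya, add_mul, one_mul, div_mul_cancel₀ _ (ne_of_gt hya)]
    calc dist x (a : EuclideanSpace ℝ (Fin n)) ≤ dist x y + dist y a := dist_triangle _ _ _
      _ = dist y a + dist x y := by ring
  refine h1.trans (by gcongr)
end

section
/- For x, y in the upper half-plane, the mean-value symmetrization of the Apollonian weak metric equals the Poincaré metric: (1/2)(δ_{ℍ²}(x,y) + δ_{ℍ²}(y,x)) = (1/2) log((|x − ȳ| + |x − y|)/(|x − ȳ| − |x − y|)). -/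
/-!
For real `a`, the identity `(x - a)(ȳ - y) = (x - y)(ȳ - a) + (y - a)(ȳ - x)` together with
`|ȳ - a| = |y - a|` bounds `|x - a| / |y - a|` by `L = (|x - ȳ| + |x - y|) / (2 Im y)`.
This bound is the supremum: if `L = 1` the ratio tends to `1` as `a → ∞`, and otherwise
`|x - a|² - L² |y - a|²` is a quadratic in `a` with vanishing discriminant, so `L` is attained.
Multiplying the bounds for `(x, y)` and `(y, x)` and using `|x - ȳ|² - |x - y|² = 4 Im x Im y`
gives the Poincaré distance.
-/

open Complex ComplexConjugate Filter Topology

theorem norm_sub_ofReal_sq (z : ℂ) (a : ℝ) : ‖z - a‖ ^ 2 = (z.re - a) ^ 2 + z.im ^ 2 := by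
  rw [Complex.sq_norm, normSq_apply]
  simp only [sub_re, sub_im, ofReal_re, ofReal_im]
  ring

theorem norm_sub_ofReal_pos {z : ℂ} (hz : z.im ≠ 0) (a : ℝ) : 0 < ‖z - a‖ :=
  norm_pos_iff.2 fun h => hz (by simpa using congrArg im h)

theorem norm_sub_sq_eq (x y : ℂ) : ‖x - y‖ ^ 2 = (x.re - y.re) ^ 2 + (x.im - y.im) ^ 2 := by
  rw [Complex.sq_norm, normSq_apply]
  simp only [sub_re, sub_im]
  ring

theorem norm_sub_conj_sq (x y : ℂ) :
    ‖x - conj y‖ ^ 2 = (x.re - y.re) ^ 2 + (x.im + y.im) ^ 2 := by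
  rw [Complex.sq_norm, normSq_apply]
  simp only [sub_re, sub_im, conj_re, conj_im]
  ring

theorem norm_sub_conj_sq_sub_norm_sub_sq (x y : ℂ) :
    ‖x - conj y‖ ^ 2 - ‖x - y‖ ^ 2 = 4 * x.im * y.im := by
  rw [norm_sub_conj_sq, norm_sub_sq_eq]
  ring

theorem norm_sub_lt_norm_sub_conj {x y : ℂ} (hx : 0 < x.im) (hy : 0 < y.im) :
    ‖x - y‖ < ‖x - conj y‖ := by
  have := norm_sub_conj_sq_sub_norm_sub_sq x y
  exact pow_lt_pow_iff_left₀ (norm_nonneg _) (norm_nonneg _) two_ne_zero |>.1 (by nlinarith)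

theorem norm_sub_conj_comm (x y : ℂ) : ‖y - conj x‖ = ‖x - conj y‖ := by
  rw [← norm_conj, ← norm_neg]
  simp

theorem norm_sub_ofReal_mul_le (x y : ℂ) (a : ℝ) :
    ‖x - a‖ * (2 * |y.im|) ≤ (‖x - conj y‖ + ‖x - y‖) * ‖y - a‖ := by
  have hid : (x - a) * (conj y - y) = (x - y) * conj (y - a) + (y - a) * (conj y - x) := by
    simp only [map_sub, conj_ofReal]
    ring
  have hconj : ‖conj y - y‖ = 2 * |y.im| := by
    rw [norm_sub_rev, sub_conj, norm_mul, norm_I, mul_one, norm_real, Real.norm_eq_abs, abs_mul,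
      abs_two]
  calc ‖x - a‖ * (2 * |y.im|) = ‖(x - y) * conj (y - a) + (y - a) * (conj y - x)‖ := by
        rw [← hid, norm_mul, hconj]
    _ ≤ ‖x - y‖ * ‖y - a‖ + ‖y - a‖ * ‖x - conj y‖ := by
        refine (norm_add_le _ _).trans_eq ?_
        rw [norm_mul, norm_mul, norm_conj, norm_sub_rev (conj y)]
    _ = (‖x - conj y‖ + ‖x - y‖) * ‖y - a‖ := by ring

theorem tendsto_log_norm_sub_div_norm_sub_atTop (x y : ℂ) :
    Tendsto (fun a : ℝ => Real.log (‖x - a‖ / ‖y - a‖)) atTop (𝓝 0) := by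
  have hcob : Tendsto (fun a : ℝ => y - a) atTop (Bornology.cobounded ℂ) :=
    (tendsto_const_sub_cobounded y).comp (RCLike.tendsto_ofReal_atTop_cobounded ℂ)
  have hne : ∀ᶠ a : ℝ in atTop, y - a ≠ 0 :=
    ((tendsto_norm_cobounded_atTop.comp hcob).eventually_gt_atTop 0).mono
      fun _ h => norm_pos_iff.mp h
  have hquot : Tendsto (fun a : ℝ => 1 + (x - y) * (y - a)⁻¹) atTop (𝓝 1) := by
    simpa using ((tendsto_inv₀_cobounded.comp hcob).const_mul (x - y)).const_add 1
  have hlog := (Real.continuousAt_log one_ne_zero).tendsto.comp (by simpa using hquot.norm)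
  rw [Real.log_one] at hlog
  refine hlog.congr' (hne.mono fun a ha => ?_)
  simp only [Function.comp_apply, ← norm_div]
  congr 2
  field_simp
  ring

theorem exists_norm_sub_ofReal_sq_eq {x y : ℂ} (hy : 0 < y.im)
    (hM : ((‖x - conj y‖ + ‖x - y‖) / (2 * y.im)) ^ 2 ≠ 1) :
    ∃ a : ℝ, ‖x - a‖ ^ 2 = ((‖x - conj y‖ + ‖x - y‖) / (2 * y.im)) ^ 2 * ‖y - a‖ ^ 2 := by
  set B := ‖x - conj y‖
  set A := ‖x - y‖
  set M := ((B + A) / (2 * y.im)) ^ 2 with hM_def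
  set K := (x.re - y.re) ^ 2 + x.im ^ 2 + y.im ^ 2
  have hB := norm_sub_conj_sq x y
  have hA := norm_sub_sq_eq x y
  -- `-4` times the discriminant of `a ↦ ‖x - a‖ ^ 2 - M * ‖y - a‖ ^ 2`; multiplied by `16 y.im ^ 2`
  -- it becomes `m ^ 2 - 2 (A ^ 2 + B ^ 2) m + (B ^ 2 - A ^ 2) ^ 2` at `m = (B + A) ^ 2`, which is
  -- `m ((B + A) ^ 2 - 2 (A ^ 2 + B ^ 2) + (B - A) ^ 2) = 0`
  have hdisc : y.im ^ 2 * M ^ 2 - K * M + x.im ^ 2 = 0 := by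
    have hm : 4 * y.im ^ 2 * M = (B + A) ^ 2 := by
      rw [hM_def]
      field_simp
      ring
    have h16 : 16 * y.im ^ 2 * (y.im ^ 2 * M ^ 2 - K * M + x.im ^ 2) = 0 := by
      linear_combination (4 * y.im ^ 2 * M + (B + A) ^ 2 - 4 * K) * hm
        + 2 * (B + A) ^ 2 * (hA + hB) - (B ^ 2 - A ^ 2 + 4 * x.im * y.im) * (hB - hA)
    simpa [hy.ne'] using h16
  obtain ⟨a, ha⟩ := exists_quadratic_eq_zero (sub_ne_zero.2 hM.symm)
    (b := -2 * (x.re - M * y.re)) (c := x.re ^ 2 + x.im ^ 2 - M * (y.re ^ 2 + y.im ^ 2))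
    ⟨0, by rw [discrim]; linear_combination (-4) * hdisc⟩
  refine ⟨a, ?_⟩
  rw [norm_sub_ofReal_sq, norm_sub_ofReal_sq]
  linear_combination ha

/-- The paper's `δ_{ℍ²}(x, y)`. -/
noncomputable def apollonianWeakDist (x y : ℂ) : ℝ :=
  ⨆ a : ℝ, Real.log (‖x - a‖ / ‖y - a‖)

theorem apollonianWeakDist_eq {x y : ℂ} (hx : 0 < x.im) (hy : 0 < y.im) :
    apollonianWeakDist x y = Real.log ((‖x - conj y‖ + ‖x - y‖) / (2 * y.im)) := by
  set L := (‖x - conj y‖ + ‖x - y‖) / (2 * y.im)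
  have hL : 0 < L := div_pos (by linarith [norm_sub_lt_norm_sub_conj hx hy, norm_nonneg (x - y)])
    (by positivity)
  have hle (a : ℝ) : Real.log (‖x - a‖ / ‖y - a‖) ≤ Real.log L := by
    have hya := norm_sub_ofReal_pos hy.ne' a
    refine Real.log_le_log (div_pos (norm_sub_ofReal_pos hx.ne' a) hya) ?_
    rw [div_le_div_iff₀ hya (by positivity)]
    simpa [abs_of_pos hy] using norm_sub_ofReal_mul_le x y a
  have hbdd : BddAbove (Set.range fun a : ℝ => Real.log (‖x - a‖ / ‖y - a‖)) :=
    ⟨_, Set.forall_mem_range.2 hle⟩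
  refine le_antisymm (ciSup_le hle) ?_
  obtain hL1 | hL1 := eq_or_ne L 1
  · rw [hL1, Real.log_one]
    exact le_of_tendsto (tendsto_log_norm_sub_div_norm_sub_atTop x y)
      (Eventually.of_forall fun a => le_ciSup hbdd a)
  · obtain ⟨a, ha⟩ := exists_norm_sub_ofReal_sq_eq (x := x) hy
      (by rwa [Ne, pow_eq_one_iff_of_nonneg hL.le two_ne_zero])
    have hratio : ‖x - a‖ / ‖y - a‖ = L := by
      rw [div_eq_iff (norm_sub_ofReal_pos hy.ne' a).ne']
      rw [← mul_pow] at ha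
      exact (pow_left_inj₀ (norm_nonneg _) (by positivity) two_ne_zero).1 ha
    exact hratio ▸ le_ciSup hbdd a

/-- The mean-value symmetrization of the Apollonian weak metric of the upper half-plane
is the Poincaré metric. -/
theorem apollonian_halfplane_symmetrization (x y : ℂ) (hx : 0 < x.im) (hy : 0 < y.im) :
    (1 / 2) * ((⨆ a : ℝ, Real.log (‖x - (a : ℂ)‖ / ‖y - (a : ℂ)‖)) +
        ⨆ a : ℝ, Real.log (‖y - (a : ℂ)‖ / ‖x - (a : ℂ)‖)) =
      (1 / 2) * Real.log ((‖x - (starRingEnd ℂ) y‖ + ‖x - y‖) /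
        (‖x - (starRingEnd ℂ) y‖ - ‖x - y‖)) := by
  change (1 / 2) * (apollonianWeakDist x y + apollonianWeakDist y x) = _
  have hlt := norm_sub_lt_norm_sub_conj hx hy
  have hsum : 0 < ‖x - conj y‖ + ‖x - y‖ := by linarith [norm_nonneg (x - y)]
  rw [apollonianWeakDist_eq hx hy, apollonianWeakDist_eq hy hx, norm_sub_conj_comm x y,
    norm_sub_rev y x, ← Real.log_mul (by positivity) (by positivity), div_mul_div_comm]
  congr 2
  rw [div_eq_div_iff (by positivity) (by linarith)]
  linear_combination (‖x - conj y‖ + ‖x - y‖) * norm_sub_conj_sq_sub_norm_sub_sq x y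
end

section
/- Let x, y ∈ ℂ be distinct points with |y| ≠ 1 and xȳ ≠ 1. Then the maximum over the unit circle {a : |a| = 1} of f(a) = |x−a|/|y−a| equals (|x−y| + |xȳ−1|)/||y|²−1|, and it is attained at the point a⁺ = (|x−y|(xȳ−1)y + (x−y)|xȳ−1|)/(|x−y|(xȳ−1) + (x−y)|xȳ−1|ȳ). -/
/-!
For `‖a‖ = 1` one has `‖conj y * a - 1‖ = ‖y - a‖`, so the identity
`(y ȳ - 1)(x - a) = (x ȳ - 1)(y - a) + (x - y)(ȳ a - 1)` and the triangle inequality give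
`|‖y‖² - 1| ‖x - a‖ ≤ (‖x ȳ - 1‖ + ‖x - y‖) ‖y - a‖`.
At `a⁺` both summands are positive real multiples of the same complex number, so equality holds
there; `a⁺` lies on the circle because its numerator `N` and denominator `D` satisfy `N N̄ = D D̄`.
-/

open Complex

/-- The maximizing boundary point a⁺(x,y) for |x-a|/|y-a| on the unit circle. -/
noncomputable def aplusPoint (x y : ℂ) : ℂ :=
  (((‖x - y‖ : ℝ) : ℂ) * (x * (starRingEnd ℂ) y - 1) * y +
      (x - y) * ((‖x * (starRingEnd ℂ) y - 1‖ : ℝ) : ℂ)) /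
    (((‖x - y‖ : ℝ) : ℂ) * (x * (starRingEnd ℂ) y - 1) +
      (x - y) * ((‖x * (starRingEnd ℂ) y - 1‖ : ℝ) : ℂ) * (starRingEnd ℂ) y)

open ComplexConjugate

namespace Complex

lemma mul_conj_sub_one (y : ℂ) : y * conj y - 1 = ((‖y‖ ^ 2 - 1 : ℝ) : ℂ) := by
  rw [mul_conj']
  push_cast
  rfl

lemma norm_mul_conj_sub_one (y : ℂ) : ‖y * conj y - 1‖ = |‖y‖ ^ 2 - 1| := by
  rw [mul_conj_sub_one, norm_real, Real.norm_eq_abs]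

lemma abs_norm_sq_sub_one_pos {y : ℂ} (hy : ‖y‖ ≠ 1) : 0 < |‖y‖ ^ 2 - 1| :=
  abs_pos.mpr <| sub_ne_zero.mpr fun h ↦
    hy ((pow_eq_one_iff_of_nonneg (norm_nonneg y) two_ne_zero).mp h)

lemma norm_eq_norm_of_mul_conj_eq {z w : ℂ} (h : z * conj z = w * conj w) : ‖z‖ = ‖w‖ := by
  rw [mul_conj', mul_conj'] at h
  exact (pow_left_inj₀ (norm_nonneg z) (norm_nonneg w) two_ne_zero).mp (mod_cast h)

lemma norm_conj_mul_sub_one {a : ℂ} (ha : ‖a‖ = 1) (y : ℂ) : ‖conj y * a - 1‖ = ‖y - a‖ := by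
  have haa : a * conj a = 1 := by rw [mul_conj', ha]; norm_num
  have h : (conj y * a - 1) * conj a = conj (y - a) := by
    rw [map_sub]
    linear_combination conj y * haa
  rw [← norm_conj (y - a), ← h, norm_mul, norm_conj, ha, mul_one]

lemma mul_conj_sub_one_mul_sub (x y a : ℂ) :
    (y * conj y - 1) * (x - a) = (x * conj y - 1) * (y - a) + (x - y) * (conj y * a - 1) := by
  ring

theorem norm_sub_div_norm_sub_le (x : ℂ) {y a : ℂ} (hy : ‖y‖ ≠ 1) (ha : ‖a‖ = 1) :
    ‖x - a‖ / ‖y - a‖ ≤ (‖x - y‖ + ‖x * conj y - 1‖) / |‖y‖ ^ 2 - 1| := by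
  have hya : 0 < ‖y - a‖ := norm_pos_iff.mpr <| sub_ne_zero.mpr fun h ↦ hy (h ▸ ha)
  rw [div_le_div_iff₀ hya (abs_norm_sq_sub_one_pos hy)]
  calc ‖x - a‖ * |‖y‖ ^ 2 - 1|
      = ‖(x * conj y - 1) * (y - a) + (x - y) * (conj y * a - 1)‖ := by
        rw [← mul_conj_sub_one_mul_sub, norm_mul, norm_mul_conj_sub_one, mul_comm]
    _ ≤ ‖x * conj y - 1‖ * ‖y - a‖ + ‖x - y‖ * ‖y - a‖ := by
        grw [norm_add_le, norm_mul, norm_mul, norm_conj_mul_sub_one ha]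
    _ = (‖x - y‖ + ‖x * conj y - 1‖) * ‖y - a‖ := by ring

lemma norm_mul_mul_add_eq_norm_add_mul_conj (p q y : ℂ) :
    ‖(‖q‖ : ℂ) * p * y + q * ‖p‖‖ = ‖(‖q‖ : ℂ) * p + q * ‖p‖ * conj y‖ := by
  apply norm_eq_norm_of_mul_conj_eq
  simp only [map_add, map_mul, conj_ofReal, conj_conj]
  linear_combination (y * conj y - 1) * ((‖q‖ : ℂ) ^ 2 * mul_conj' p - (‖p‖ : ℂ) ^ 2 * mul_conj' q)

lemma add_mul_conj_ne_zero {p q y : ℂ} (hp : p ≠ 0) (hq : q ≠ 0) (hy : ‖y‖ ≠ 1) :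
    (‖q‖ : ℂ) * p + q * ‖p‖ * conj y ≠ 0 := by
  intro h
  have h' := congrArg (‖·‖) (eq_neg_of_add_eq_zero_left h)
  simp only [norm_neg, norm_mul, norm_real, Real.norm_eq_abs, abs_norm, RCLike.norm_conj] at h'
  exact hy <| (mul_right_eq_self₀.mp (by linarith)).resolve_right
    (mul_ne_zero (norm_ne_zero_iff.mpr hq) (norm_ne_zero_iff.mpr hp))

lemma norm_sub_div_div_norm_sub_div (x y N : ℂ) {D : ℂ} (hD : D ≠ 0) :
    ‖x - N / D‖ / ‖y - N / D‖ = ‖x * D - N‖ / ‖y * D - N‖ := by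
  rw [sub_div' hD, sub_div' hD, norm_div, norm_div,
    div_div_div_cancel_right₀ (norm_ne_zero_iff.mpr hD)]

end Complex

section aplusPoint

variable {x y : ℂ}

lemma aplusPoint_denom_ne_zero (hxy : x ≠ y) (hy : ‖y‖ ≠ 1) (hxyb : x * conj y ≠ 1) :
    (‖x - y‖ : ℂ) * (x * conj y - 1) + (x - y) * ‖x * conj y - 1‖ * conj y ≠ 0 :=
  add_mul_conj_ne_zero (sub_ne_zero.mpr hxyb) (sub_ne_zero.mpr hxy) hy

lemma norm_aplusPoint (hxy : x ≠ y) (hy : ‖y‖ ≠ 1) (hxyb : x * conj y ≠ 1) :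
    ‖aplusPoint x y‖ = 1 := by
  rw [aplusPoint, norm_div, norm_mul_mul_add_eq_norm_add_mul_conj,
    div_self (norm_ne_zero_iff.mpr (aplusPoint_denom_ne_zero hxy hy hxyb))]

lemma norm_sub_aplusPoint_div_norm_sub_aplusPoint (hxy : x ≠ y) (hy : ‖y‖ ≠ 1)
    (hxyb : x * conj y ≠ 1) :
    ‖x - aplusPoint x y‖ / ‖y - aplusPoint x y‖ =
      (‖x - y‖ + ‖x * conj y - 1‖) / |‖y‖ ^ 2 - 1| := by
  set r := ‖x - y‖
  set s := ‖x * conj y - 1‖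
  have hr : r ≠ 0 := norm_ne_zero_iff.mpr (sub_ne_zero.mpr hxy)
  have hs : s ≠ 0 := norm_ne_zero_iff.mpr (sub_ne_zero.mpr hxyb)
  have hx : x * ((r : ℂ) * (x * conj y - 1) + (x - y) * s * conj y) -
      ((r : ℂ) * (x * conj y - 1) * y + (x - y) * s) =
      (x - y) * (x * conj y - 1) * ((r + s : ℝ) : ℂ) := by
    push_cast; ring
  have hy' : y * ((r : ℂ) * (x * conj y - 1) + (x - y) * s * conj y) -
      ((r : ℂ) * (x * conj y - 1) * y + (x - y) * s) =
      (x - y) * s * (y * conj y - 1) := by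
    ring
  rw [aplusPoint, norm_sub_div_div_norm_sub_div _ _ _ (aplusPoint_denom_ne_zero hxy hy hxyb),
    hx, hy', norm_mul, norm_mul, norm_mul, norm_mul, norm_mul_conj_sub_one, norm_real, norm_real,
    Real.norm_of_nonneg (by positivity), Real.norm_of_nonneg (norm_nonneg _)]
  exact mul_div_mul_left _ _ (mul_ne_zero hr hs)

end aplusPoint

/-- The maximum of |x-a|/|y-a| over the unit circle equals
(|x-y| + |x ȳ - 1|)/||y|²-1|, attained at the point a⁺(x,y). -/
theorem max_ratio_on_circle (x y : ℂ) (hxy : x ≠ y) (hy : ‖y‖ ≠ 1)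
    (hxyb : x * (starRingEnd ℂ) y ≠ 1) :
    (∀ a : ℂ, ‖a‖ = 1 →
        ‖x - a‖ / ‖y - a‖ ≤
          (‖x - y‖ + ‖x * (starRingEnd ℂ) y - 1‖) /
            |‖y‖ ^ 2 - 1|) ∧
    ‖aplusPoint x y‖ = 1 ∧
    ‖x - aplusPoint x y‖ / ‖y - aplusPoint x y‖ =
      (‖x - y‖ + ‖x * (starRingEnd ℂ) y - 1‖) /
        |‖y‖ ^ 2 - 1| :=
  ⟨fun _ ha ↦ norm_sub_div_norm_sub_le x hy ha, norm_aplusPoint hxy hy hxyb,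
    norm_sub_aplusPoint_div_norm_sub_aplusPoint hxy hy hxyb⟩
end

section
/- Let x, y ∈ ℂ be distinct with |y| ≠ 1. The minimum over the unit circle of f(a) = |x−a|/|y−a| equals ||x−y| − |xȳ−1|| / ||y|² − 1|. -/
/-!
The Möbius map `w ↦ (w y + 1) / (w + ȳ)` permutes the unit circle when `|y| ≠ 1`, and under it
`(|y|² - 1)(x - a) = (x ȳ - 1 + w (x - y))(y - a)`. So `f(a) = |x ȳ - 1 + w (x - y)| / ||y|² - 1|`
with `w` running over the unit circle, and the minimum of `|u + w v|` over `|w| = 1` is `||u| - |v||`,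
attained when `w v` points opposite to `u`.
-/

open Complex ComplexConjugate

lemma norm_div_norm_eq_of_mul_eq {𝕜 : Type*} [NormedDivisionRing 𝕜] {k p q c : 𝕜}
    (hk : k ≠ 0) (hq : q ≠ 0) (h : k * p = c * q) : ‖p‖ / ‖q‖ = ‖c‖ / ‖k‖ := by
  rw [div_eq_div_iff (norm_ne_zero_iff.2 hq) (norm_ne_zero_iff.2 hk)]
  have := congrArg norm h
  rw [norm_mul, norm_mul] at this
  linarith

lemma abs_norm_sub_norm_le_norm_add_mul {u v w : ℂ} (hw : ‖w‖ = 1) :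
    |‖u‖ - ‖v‖| ≤ ‖u + w * v‖ := by
  simpa [norm_mul, hw] using abs_norm_sub_norm_le u (-(w * v))

lemma exists_norm_eq_one_norm_add_mul_eq (u v : ℂ) :
    ∃ w : ℂ, ‖w‖ = 1 ∧ ‖u + w * v‖ = |‖u‖ - ‖v‖| := by
  by_cases hv : v = 0
  · exact ⟨1, by simp, by simp [hv]⟩
  by_cases hu : u = 0
  · exact ⟨1, by simp, by simp [hu]⟩
  refine ⟨-(‖v‖ * u) / (‖u‖ * v), ?_, ?_⟩
  · simp only [norm_div, norm_neg, norm_mul, norm_real, norm_norm]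
    field_simp
  · have : u + -(‖v‖ * u) / (‖u‖ * v) * v = ((1 - ‖v‖ / ‖u‖ : ℝ) : ℂ) * u := by
      push_cast
      field_simp
      ring
    rw [this, norm_mul, norm_real, Real.norm_eq_abs,
      show ‖u‖ - ‖v‖ = (1 - ‖v‖ / ‖u‖) * ‖u‖ by field_simp, abs_mul, abs_norm]

lemma norm_mul_conj_sub_one_of_norm_eq_one {a : ℂ} (ha : ‖a‖ = 1) (z : ℂ) :
    ‖a * conj z - 1‖ = ‖z - a‖ := by
  have : a * conj z - 1 = a * conj (z - a) := by
    rw [map_sub, mul_sub, mul_conj', ha]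
    simp
  rw [this, norm_mul, ha, one_mul, norm_conj]

lemma norm_mul_conj_self_sub_one (y : ℂ) : ‖y * conj y - 1‖ = |‖y‖ ^ 2 - 1| := by
  rw [mul_conj', ← ofReal_pow, ← ofReal_one, ← ofReal_sub, norm_real, Real.norm_eq_abs]

section UnitCircle

variable {x y : ℂ} (hy : ‖y‖ ≠ 1)
include hy

lemma mul_conj_self_sub_one_ne_zero : y * conj y - 1 ≠ 0 := by
  rw [← norm_ne_zero_iff, norm_mul_conj_self_sub_one, abs_ne_zero, sub_ne_zero]
  exact fun h => hy ((pow_eq_one_iff_of_nonneg (norm_nonneg y) two_ne_zero).1 h)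

lemma sub_ne_zero_of_norm_eq_one {a : ℂ} (ha : ‖a‖ = 1) : y - a ≠ 0 :=
  fun h => hy (by rw [sub_eq_zero.1 h, ha])

lemma exists_norm_add_mul_eq_ratio {a : ℂ} (ha : ‖a‖ = 1) :
    ∃ w : ℂ, ‖w‖ = 1 ∧
      ‖x - a‖ / ‖y - a‖ = ‖x * conj y - 1 + w * (x - y)‖ / |‖y‖ ^ 2 - 1| := by
  have hya := sub_ne_zero_of_norm_eq_one hy ha
  refine ⟨(a * conj y - 1) / (y - a), ?_, ?_⟩
  · rw [norm_div, norm_mul_conj_sub_one_of_norm_eq_one ha, div_self (norm_ne_zero_iff.2 hya)]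
  · rw [← norm_mul_conj_self_sub_one]
    refine norm_div_norm_eq_of_mul_eq (mul_conj_self_sub_one_ne_zero hy) hya ?_
    field_simp
    ring

lemma exists_ratio_eq_norm_add_mul {w : ℂ} (hw : ‖w‖ = 1) :
    ∃ a : ℂ, ‖a‖ = 1 ∧
      ‖x - a‖ / ‖y - a‖ = ‖x * conj y - 1 + w * (x - y)‖ / |‖y‖ ^ 2 - 1| := by
  have hwy : w + conj y ≠ 0 := by
    rw [← sub_neg_eq_add, sub_ne_zero]
    intro h
    exact hy (by simpa [hw] using (congrArg norm h).symm)
  have hnum : ‖w * y + 1‖ = ‖w + conj y‖ := by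
    have := norm_mul_conj_sub_one_of_norm_eq_one hw (-conj y)
    rwa [map_neg, conj_conj, mul_neg, ← neg_add', norm_neg, ← neg_add', norm_neg,
      add_comm (conj y)] at this
  set a := (w * y + 1) / (w + conj y)
  have ha : ‖a‖ = 1 := by rw [norm_div, hnum, div_self (norm_ne_zero_iff.2 hwy)]
  refine ⟨a, ha, ?_⟩
  rw [← norm_mul_conj_self_sub_one]
  refine norm_div_norm_eq_of_mul_eq (mul_conj_self_sub_one_ne_zero hy)
    (sub_ne_zero_of_norm_eq_one hy ha) ?_
  simp only [a]
  field_simp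
  ring

end UnitCircle

theorem min_ratio_on_circle_general (x y : ℂ) (hy : ‖y‖ ≠ 1) :
    IsLeast {r : ℝ | ∃ a : ℂ, ‖a‖ = 1 ∧
        r = ‖x - a‖ / ‖y - a‖}
      (|‖x - y‖ - ‖x * (starRingEnd ℂ) y - 1‖| /
        |‖y‖ ^ 2 - 1|) := by
  constructor
  · obtain ⟨w, hw, hmin⟩ := exists_norm_eq_one_norm_add_mul_eq (x * conj y - 1) (x - y)
    obtain ⟨a, ha, hratio⟩ := exists_ratio_eq_norm_add_mul (x := x) hy hw
    exact ⟨a, ha, by rw [hratio, hmin, abs_sub_comm]⟩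
  · rintro _ ⟨a, ha, rfl⟩
    obtain ⟨w, hw, hratio⟩ := exists_norm_add_mul_eq_ratio (x := x) hy ha
    rw [hratio, abs_sub_comm]
    gcongr
    exact abs_norm_sub_norm_le_norm_add_mul hw

/-- The minimum of |x-a|/|y-a| over the unit circle equals ||x-y| - |x ȳ - 1|| / ||y|² - 1|. -/
theorem min_ratio_on_circle (x y : ℂ) (hxy : x ≠ y) (hy : ‖y‖ ≠ 1) :
    IsLeast {r : ℝ | ∃ a : ℂ, ‖a‖ = 1 ∧
        r = ‖x - a‖ / ‖y - a‖}
      (|‖x - y‖ - ‖x * (starRingEnd ℂ) y - 1‖| /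
        |‖y‖ ^ 2 - 1|) :=
  min_ratio_on_circle_general x y hy
end

section
/- For x, y in the open unit disk 𝔻² ⊂ ℂ, the Apollonian weak metric satisfies δ_{𝔻²}(x,y) = sup_{|a|=1} log(|x−a|/|y−a|) = log((|x−y| + |xȳ−1|)/(1−|y|²)). -/
/-!
Write `d = 1 - |y|²`. For `|a| = 1` the Möbius map `a ↦ v = (ȳa - 1)/(a - y)` takes values on
the unit circle, and the identity `(a - x) d = (a - y) ((x - y) v - (xȳ - 1))` turns the ratio
`|x - a| / |y - a|` into `|(x - y) v - (xȳ - 1)| / d`. Hence the ratio is at most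
`(|x - y| + |xȳ - 1|) / d`, and since the Möbius map is onto the circle, this bound is attained
at the `a` for which `(x - y) v` points in the direction of `1 - xȳ`.
-/

open Complex ComplexConjugate Set

theorem norm_sub_pos_of_norm_lt {E : Type*} [SeminormedAddCommGroup E] {z a : E}
    (h : ‖z‖ < ‖a‖) : 0 < ‖z - a‖ :=
  (sub_pos.2 h).trans_le (by simpa only [norm_sub_rev z a] using norm_sub_norm_le a z)

theorem norm_conj_mul_sub_one_of_norm_eq_one {a : ℂ} (ha : ‖a‖ = 1) (y : ℂ) :
    ‖conj y * a - 1‖ = ‖a - y‖ := by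
  have hunit : a * conj a = 1 := by rw [Complex.mul_conj', ha]; norm_num
  calc ‖conj y * a - 1‖ = ‖a * conj (y - a)‖ := by
        rw [map_sub]; congr 1; linear_combination hunit
    _ = ‖a - y‖ := by rw [norm_mul, ha, one_mul, RCLike.norm_conj, norm_sub_rev]

theorem exists_norm_eq_one_conj_mul_sub_one_eq {y v : ℂ} (hy : ‖y‖ < 1) (hv : ‖v‖ = 1) :
    ∃ a : ℂ, ‖a‖ = 1 ∧ conj y * a - 1 = v * (a - y) := by
  have hne : conj y - v ≠ 0 :=
    norm_pos_iff.mp (norm_sub_pos_of_norm_lt (by rwa [RCLike.norm_conj, hv]))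
  refine ⟨(1 - v * y) / (conj y - v), ?_, by field_simp; ring⟩
  rw [norm_div, div_eq_one_iff_eq (norm_ne_zero_iff.mpr hne)]
  calc ‖1 - v * y‖ = ‖conj (conj y) * v - 1‖ := by rw [conj_conj, norm_sub_rev, mul_comm]
    _ = ‖conj y - v‖ := by rw [norm_conj_mul_sub_one_of_norm_eq_one hv, norm_sub_rev]

theorem exists_norm_mul_sub_eq_norm_add_norm (p q : ℂ) :
    ∃ v : ℂ, ‖v‖ = 1 ∧ ‖q * v - p‖ = ‖q‖ + ‖p‖ := by
  set θ := arg (-p)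
  refine ⟨exp ((θ - arg q : ℝ) * I), norm_exp_ofReal_mul_I _, ?_⟩
  have hq : q * exp ((θ - arg q : ℝ) * I) = ‖q‖ * exp (θ * I) := by
    rw [← norm_mul_exp_arg_mul_I q, mul_assoc, ← Complex.exp_add, norm_mul_exp_arg_mul_I]
    push_cast; ring_nf
  have hp : -p = ‖p‖ * exp (θ * I) := by
    rw [← norm_neg p, norm_mul_exp_arg_mul_I]
  rw [sub_eq_add_neg, hq, hp, ← add_mul, norm_mul, norm_exp_ofReal_mul_I, mul_one]
  norm_cast
  exact Real.norm_of_nonneg (by positivity)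

theorem norm_sub_div_norm_sub_eq (x : ℂ) {y a v : ℂ} (hy : ‖y‖ < 1) (ha : ‖a‖ = 1)
    (h : conj y * a - 1 = v * (a - y)) :
    ‖x - a‖ / ‖y - a‖ = ‖(x - y) * v - (x * conj y - 1)‖ / (1 - ‖y‖ ^ 2) := by
  have key : (a - x) * (1 - y * conj y) = (a - y) * ((x - y) * v - (x * conj y - 1)) := by
    linear_combination (x - y) * h
  have hd : 0 < 1 - ‖y‖ ^ 2 := by nlinarith [norm_nonneg y]
  have hya : 0 < ‖y - a‖ := norm_sub_pos_of_norm_lt (by rwa [ha])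
  rw [Complex.mul_conj', show (1 : ℂ) - ‖y‖ ^ 2 = ((1 - ‖y‖ ^ 2 : ℝ) : ℂ) by push_cast; ring] at key
  apply_fun norm at key
  rw [norm_mul, norm_mul, norm_sub_rev a x, norm_sub_rev a y, norm_real,
    Real.norm_of_nonneg hd.le] at key
  rw [div_eq_div_iff hya.ne' hd.ne', key, mul_comm]

theorem isGreatest_range_norm_sub_div_norm_sub (x : ℂ) {y : ℂ} (hy : ‖y‖ < 1) :
    IsGreatest (range fun a : {a : ℂ // ‖a‖ = 1} => ‖x - a‖ / ‖y - a‖)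
      ((‖x - y‖ + ‖x * conj y - 1‖) / (1 - ‖y‖ ^ 2)) := by
  constructor
  · obtain ⟨v, hv, hmax⟩ := exists_norm_mul_sub_eq_norm_add_norm (x * conj y - 1) (x - y)
    obtain ⟨a, ha, h⟩ := exists_norm_eq_one_conj_mul_sub_one_eq hy hv
    exact ⟨⟨a, ha⟩, by dsimp only; rw [norm_sub_div_norm_sub_eq x hy ha h, hmax]⟩
  · rintro _ ⟨⟨a, ha⟩, rfl⟩
    have hay : a - y ≠ 0 := by
      rw [← norm_pos_iff, norm_sub_rev]; exact norm_sub_pos_of_norm_lt (by rwa [ha])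
    set v := (conj y * a - 1) / (a - y)
    have hv : ‖v‖ = 1 := by
      rw [norm_div, norm_conj_mul_sub_one_of_norm_eq_one ha, div_self (norm_ne_zero_iff.mpr hay)]
    have hd : 0 < 1 - ‖y‖ ^ 2 := by nlinarith [norm_nonneg y]
    dsimp only
    rw [norm_sub_div_norm_sub_eq x hy ha (div_mul_cancel₀ _ hay).symm]
    gcongr
    calc ‖(x - y) * v - (x * conj y - 1)‖ ≤ ‖(x - y) * v‖ + ‖x * conj y - 1‖ := norm_sub_le _ _
      _ = ‖x - y‖ + ‖x * conj y - 1‖ := by rw [norm_mul, hv, mul_one]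

/-- Explicit formula for the Apollonian weak metric of the unit disk. -/
theorem apollonian_disk_formula (x y : ℂ) (hx : ‖x‖ < 1) (hy : ‖y‖ < 1) :
    (⨆ a : {a : ℂ // ‖a‖ = 1},
        Real.log (‖x - (a : ℂ)‖ / ‖y - (a : ℂ)‖)) =
      Real.log ((‖x - y‖ + ‖x * (starRingEnd ℂ) y - 1‖) /
        (1 - ‖y‖ ^ 2)) := by
  obtain ⟨⟨⟨a₀, ha₀⟩, hmax⟩, hle⟩ := isGreatest_range_norm_sub_div_norm_sub x hy
  have hpos : ∀ a : ℂ, ‖a‖ = 1 → 0 < ‖x - a‖ / ‖y - a‖ := fun a ha =>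
    div_pos (norm_sub_pos_of_norm_lt (by rwa [ha])) (norm_sub_pos_of_norm_lt (by rwa [ha]))
  refine IsGreatest.csSup_eq ⟨⟨⟨a₀, ha₀⟩, congrArg Real.log hmax⟩, ?_⟩
  rintro _ ⟨⟨a, ha⟩, rfl⟩
  exact Real.log_le_log (hpos a ha) (hle ⟨⟨a, ha⟩, rfl⟩)
end
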